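/- Operator-norm bound on the twirled swap: Let T : L(H_A) → L(H_B) be a linear map sending Hermitian matrices to Hermitian matrices, with Choi–Jamiołkowski representation ω = (T⊗id)(Φ_{AA'}), and let T† : L(H_B) → L(H_A) denote its adjoint with respect to the Hilbert–Schmidt inner product ⟨X,Y⟩ = Tr(X†Y). Then ‖(T†⊗T†)(F_B)‖_∞ ≤ d_A² · Tr(ω²), where F_B is the swap operator on H_B⊗H_B and ‖·‖_∞ is the operator norm. -/

import Mathlib

open scoped Kronecker
open MeasureTheory Matrix
open scoped ComplexOrder

noncomputable section

namespace Decoupling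

/-- We equip the unitary group with its Borel σ-algebra. -/
instance (n : Type*) [Fintype n] [DecidableEq n] :
    MeasurableSpace (Matrix.unitaryGroup n ℂ) := borel _

instance (n : Type*) [Fintype n] [DecidableEq n] :
    BorelSpace (Matrix.unitaryGroup n ℂ) := ⟨rfl⟩

/-- The trace norm (Schatten 1-norm) `‖X‖₁ = Tr √(XᴴX)` of a complex matrix. -/
def trNorm {n : Type*} [Fintype n] [DecidableEq n] (X : Matrix n n ℂ) : ℝ :=
  (((Matrix.posSemidef_conjTranspose_mul_self X).1.eigenvectorUnitary.1 *
    diagonal ((fun r : ℝ => (r : ℂ)) ∘ (√·) ∘ (Matrix.posSemidef_conjTranspose_mul_self X).1.eigenvalues) *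
    (star (Matrix.posSemidef_conjTranspose_mul_self X).1.eigenvectorUnitary : Matrix n n ℂ)).trace).re

/-- The Hilbert–Schmidt norm (Schatten 2-norm) `‖X‖₂ = √(Tr (XᴴX))`. -/
def hsNorm {n : Type*} [Fintype n] (X : Matrix n n ℂ) : ℝ :=
  Real.sqrt ((Xᴴ * X).trace.re)

/-- Partial trace over the first tensor factor. -/
def ptrFst {a r : Type*} [Fintype a] (ρ : Matrix (a × r) (a × r) ℂ) : Matrix r r ℂ :=
  Matrix.of fun i j => ∑ k, ρ (k, i) (k, j)

/-- Partial trace over the second tensor factor. -/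
def ptrSnd {a r : Type*} [Fintype r] (ρ : Matrix (a × r) (a × r) ℂ) : Matrix a a ℂ :=
  Matrix.of fun i j => ∑ k, ρ (i, k) (j, k)

/-- The maximally entangled state `Φ_{AA'}` on `H_A ⊗ H_{A'}`. -/
def maxEnt (a : Type*) [Fintype a] [DecidableEq a] : Matrix (a × a) (a × a) ℂ :=
  Matrix.of fun p q => if p.1 = p.2 ∧ q.1 = q.2 then (Fintype.card a : ℂ)⁻¹ else 0

/-- The tensor product `T ⊗ E` of two superoperators (given on basis matrices, which
for linear `T`, `E` agrees with the usual tensor product of linear maps). -/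
def tensorHom {a a' b r : Type*} [Fintype a] [Fintype a'] [DecidableEq a] [DecidableEq a']
    (T : Matrix a a ℂ → Matrix b b ℂ) (E : Matrix a' a' ℂ → Matrix r r ℂ)
    (M : Matrix (a × a') (a × a') ℂ) : Matrix (b × r) (b × r) ℂ :=
  Matrix.of fun p q => ∑ i, ∑ j, ∑ k, ∑ l,
    M (i, k) (j, l) * T (Matrix.single i j 1) p.1 q.1
      * E (Matrix.single k l 1) p.2 q.2

/-- The Choi–Jamiołkowski representation `ω = (T ⊗ id)(Φ_{AA'})`, with the output (`B`)
factor first and the copy `A'` second. -/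
def choi {a b : Type*} [Fintype a] [DecidableEq a]
    (T : Matrix a a ℂ → Matrix b b ℂ) : Matrix (b × a) (b × a) ℂ :=
  tensorHom T id (maxEnt a)

/-- Reindexing that exchanges the two tensor factors. -/
def swapIdx {a b : Type*} (M : Matrix (a × b) (a × b) ℂ) : Matrix (b × a) (b × a) ℂ :=
  M.submatrix Prod.swap Prod.swap

/-- The conditional min-entropy `Hmin(A|B)_ρ` of a bipartite operator (conditioning on the
second tensor factor). -/
def Hmin {a b : Type*} [Fintype a] [DecidableEq a] [Fintype b]
    (ρ : Matrix (a × b) (a × b) ℂ) : ℝ :=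
  sSup {x : ℝ | ∃ σ : Matrix b b ℂ, σ.PosSemidef ∧ σ.trace = 1 ∧
    ((2 : ℝ) ^ (-x) • ((1 : Matrix a a ℂ) ⊗ₖ σ) - ρ).PosSemidef}

/-- A subnormalized density operator. -/
def IsSubDensity {n : Type*} [Fintype n] (ρ : Matrix n n ℂ) : Prop :=
  ρ.PosSemidef ∧ ρ.trace.re ≤ 1

/-- Conjugation `(U ⊗ 1_R) ρ (U ⊗ 1_R)ᴴ` on the first factor. -/
def conjA {a r : Type*} [Fintype a] [Fintype r] [DecidableEq r]
    (U : Matrix a a ℂ) (ρ : Matrix (a × r) (a × r) ℂ) : Matrix (a × r) (a × r) ℂ :=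
  (U ⊗ₖ (1 : Matrix r r ℂ)) * ρ * (U ⊗ₖ (1 : Matrix r r ℂ))ᴴ

/-- Two-fold conjugation `U^{⊗2} M (U^{⊗2})ᴴ`. -/
def conj2 {a : Type*} [Fintype a] (U : Matrix a a ℂ) (M : Matrix (a × a) (a × a) ℂ) :
    Matrix (a × a) (a × a) ℂ :=
  (U ⊗ₖ U) * M * (U ⊗ₖ U)ᴴ

/-- The Haar two-fold twirl `G_H(M) = ∫ U^{⊗2} M (U†)^{⊗2} dU` (entrywise integral). -/
def twirlHaar {a : Type*} [Fintype a] [DecidableEq a]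
    (μ : Measure (Matrix.unitaryGroup a ℂ)) (M : Matrix (a × a) (a × a) ℂ) :
    Matrix (a × a) (a × a) ℂ :=
  Matrix.of fun p q => ∫ U : Matrix.unitaryGroup a ℂ, conj2 (U : Matrix a a ℂ) M p q ∂μ

/-- The two-fold twirl `G_W(M) = ∑ i, p i • U_i^{⊗2} M (U_i†)^{⊗2}` of a finite family. -/
def twirlMix {ι a : Type*} [Fintype ι] [Fintype a] [DecidableEq a]
    (p : ι → ℝ) (V : ι → Matrix.unitaryGroup a ℂ) (M : Matrix (a × a) (a × a) ℂ) :
    Matrix (a × a) (a × a) ℂ :=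
  ∑ i, p i • conj2 (V i : Matrix a a ℂ) M

/-- `‖S‖⋄ ≤ δ`: the trace norm of `(S ⊗ id_R)(X)` is at most `δ ‖X‖₁` for every ancilla `R`
and every `X`. -/
def DiamondLE {c : Type*} [Fintype c] [DecidableEq c]
    (S : Matrix c c ℂ → Matrix c c ℂ) (δ : ℝ) : Prop :=
  ∀ (m : ℕ) (X : Matrix (c × Fin m) (c × Fin m) ℂ),
    trNorm (tensorHom S id X) ≤ δ * trNorm X

/-- `{(p i, V i)}` is a `δ`-approximate unitary two-design (w.r.t. the Haar probability
measure `μ`). -/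
def IsApproxTwoDesign {ι a : Type*} [Fintype ι] [Fintype a] [DecidableEq a]
    (μ : Measure (Matrix.unitaryGroup a ℂ))
    (p : ι → ℝ) (V : ι → Matrix.unitaryGroup a ℂ) (δ : ℝ) : Prop :=
  (∀ i, 0 ≤ p i) ∧ (∑ i, p i = 1) ∧
    DiamondLE (fun M => twirlMix p V M - twirlHaar μ M) δ

end Decoupling

namespace Decoupling

/-- The swap operator `F = ∑_{i,j} |i⟩⟨j| ⊗ |j⟩⟨i|` on `H ⊗ H`. -/
def swapOp (b : Type*) [DecidableEq b] : Matrix (b × b) (b × b) ℂ :=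
  Matrix.of fun p q => if p.1 = q.2 ∧ p.2 = q.1 then 1 else 0

/-- The operator norm (Schatten ∞-norm) of a complex matrix. -/
def opNorm {n : Type*} [Fintype n] [DecidableEq n] (X : Matrix n n ℂ) : ℝ :=
  ‖Matrix.toEuclideanCLM (𝕜 := ℂ) X‖

end Decoupling

/-!
Write `τ_{mn} = T(|m⟩⟨n|)`. The adjoint has entries `T†(|i⟩⟨k|)_{mn} = conj τ_{mn}(i,k)`, so the
entry of `(T† ⊗ T†)(F_B)` at `((m,m'),(n,n'))` is `conj Tr(τ_{mn} τ_{m'n'})`. By Cauchy–Schwarz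
it is at most `‖τ_{mn}‖₂ ‖τ_{m'n'}‖₂` in modulus, so the Hilbert–Schmidt norm of the twirled swap,
which dominates its operator norm, is at most `∑_{mn} ‖τ_{mn}‖₂²`. Finally `ω` has entries
`τ_{ij}(x,y) / d_A` and is Hermitian because `T` preserves Hermiticity, so
`Tr ω² = ‖ω‖₂² = d_A⁻² ∑_{mn} ‖τ_{mn}‖₂²`.
-/

open Finset

open ComplexStarModule in
theorem LinearMap.map_star_of_isSelfAdjoint {A B : Type*} [AddCommGroup A] [Module ℂ A]
    [StarAddMonoid A] [StarModule ℂ A] [AddCommGroup B] [Module ℂ B] [StarAddMonoid B]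
    [StarModule ℂ B] (f : A →ₗ[ℂ] B) (hf : ∀ x, IsSelfAdjoint x → IsSelfAdjoint (f x)) (x : A) :
    f (star x) = star (f x) := by
  rw [← realPart_add_I_smul_imaginaryPart x]
  simp only [star_add, star_smul, map_add, map_smul, (ℜ x).2.star_eq, (ℑ x).2.star_eq,
    (hf _ (ℜ x).2).star_eq, (hf _ (ℑ x).2).star_eq, Complex.star_def, Complex.conj_I]

theorem norm_sum_mul_sq_le {ι R : Type*} [SeminormedRing R] (s : Finset ι) (f g : ι → R) :
    ‖∑ i ∈ s, f i * g i‖ ^ 2 ≤ (∑ i ∈ s, ‖f i‖ ^ 2) * ∑ i ∈ s, ‖g i‖ ^ 2 :=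
  calc ‖∑ i ∈ s, f i * g i‖ ^ 2 ≤ (∑ i ∈ s, ‖f i‖ * ‖g i‖) ^ 2 := by
        gcongr
        exact (norm_sum_le _ _).trans (sum_le_sum fun i _ => norm_mul_le _ _)
    _ ≤ _ := sum_mul_sq_le_sq_mul_sq _ _ _

theorem Fintype.sum_prod_sum_prod_mul_eq_sq {ι R : Type*} [Fintype ι] [CommSemiring R]
    (f : ι → ι → R) :
    ∑ p : ι × ι, ∑ q : ι × ι, f p.1 q.1 * f p.2 q.2 = (∑ m, ∑ n, f m n) ^ 2 := by
  simp only [sq, sum_mul_sum, Fintype.sum_prod_type]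

theorem Matrix.re_trace_conjTranspose_mul_self {m n : Type*} [Fintype m] [Fintype n]
    (X : Matrix m n ℂ) : (Xᴴ * X).trace.re = ∑ i, ∑ j, ‖X i j‖ ^ 2 := by
  simp only [trace, Matrix.diag, mul_apply, conjTranspose_apply, Complex.re_sum, Complex.star_def,
    Complex.conj_mul', ← Complex.ofReal_pow, Complex.ofReal_re]
  exact sum_comm

namespace Decoupling

theorem hsNorm_nonneg {n : Type*} [Fintype n] (X : Matrix n n ℂ) : 0 ≤ hsNorm X :=
  Real.sqrt_nonneg _

theorem hsNorm_sq {n : Type*} [Fintype n] (X : Matrix n n ℂ) :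
    hsNorm X ^ 2 = ∑ i, ∑ j, ‖X i j‖ ^ 2 := by
  rw [hsNorm, Real.sq_sqrt] <;> rw [re_trace_conjTranspose_mul_self]
  positivity

theorem opNorm_le_hsNorm {n : Type*} [Fintype n] [DecidableEq n] (K : Matrix n n ℂ) :
    opNorm K ≤ hsNorm K := by
  refine ContinuousLinearMap.opNorm_le_bound _ (hsNorm_nonneg K) fun x => ?_
  rw [← sq_le_sq₀ (norm_nonneg _) (mul_nonneg (hsNorm_nonneg K) (norm_nonneg x)), mul_pow,
    hsNorm_sq, EuclideanSpace.norm_sq_eq, EuclideanSpace.norm_sq_eq, sum_mul]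
  gcongr with p
  exact norm_sum_mul_sq_le _ _ _

theorem tensorHom_swapOp_apply {a b : Type*} [Fintype b] [DecidableEq b]
    (S R : Matrix b b ℂ → Matrix a a ℂ) (p q : a × a) :
    tensorHom S R (swapOp b) p q =
      ∑ x : b × b, S (single x.1 x.2 1) p.1 q.1 * R (single x.2 x.1 1) p.2 q.2 := by
  simp [tensorHom, swapOp, ite_and, Fintype.sum_prod_type]

theorem choi_apply {a b : Type*} [Fintype a] [DecidableEq a] (T : Matrix a a ℂ → Matrix b b ℂ)
    (p q : b × a) : choi T p q = (Fintype.card a : ℂ)⁻¹ * T (single p.2 q.2 1) p.1 q.1 := by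
  simp [choi, tensorHom, maxEnt, single, ite_and]

theorem adjoint_single_apply {a b : Type*} [Fintype a] [DecidableEq a] [Fintype b]
    [DecidableEq b] (T : Matrix a a ℂ →ₗ[ℂ] Matrix b b ℂ) (Tad : Matrix b b ℂ →ₗ[ℂ] Matrix a a ℂ)
    (hadj : ∀ (X : Matrix b b ℂ) (Y : Matrix a a ℂ), ((Tad X)ᴴ * Y).trace = (Xᴴ * T Y).trace)
    (i k : b) (m n : a) :
    Tad (single i k 1) m n = star (T (single m n 1) i k) := by
  have h := hadj (single i k 1) (single m n 1)
  rw [trace_mul_single, conjTranspose_single, trace_single_mul, conjTranspose_apply] at h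
  simpa using congrArg star h

theorem norm_twirledSwap_apply_sq_le {a b : Type*} [Fintype a] [DecidableEq a] [Fintype b]
    [DecidableEq b] (T : Matrix a a ℂ →ₗ[ℂ] Matrix b b ℂ) (Tad : Matrix b b ℂ →ₗ[ℂ] Matrix a a ℂ)
    (hadj : ∀ (X : Matrix b b ℂ) (Y : Matrix a a ℂ), ((Tad X)ᴴ * Y).trace = (Xᴴ * T Y).trace)
    (p q : a × a) :
    ‖tensorHom Tad Tad (swapOp b) p q‖ ^ 2 ≤
      hsNorm (T (single p.1 q.1 1)) ^ 2 * hsNorm (T (single p.2 q.2 1)) ^ 2 := by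
  rw [tensorHom_swapOp_apply]
  simp only [adjoint_single_apply T Tad hadj]
  refine (norm_sum_mul_sq_le _ _ _).trans_eq ?_
  simp only [norm_star, hsNorm_sq, ← Fintype.sum_prod_type']
  congr 1
  exact (Equiv.prodComm b b).sum_comp fun x => ‖T (single p.2 q.2 1) x.1 x.2‖ ^ 2

theorem hsNorm_twirledSwap_le {a b : Type*} [Fintype a] [DecidableEq a] [Fintype b]
    [DecidableEq b] (T : Matrix a a ℂ →ₗ[ℂ] Matrix b b ℂ) (Tad : Matrix b b ℂ →ₗ[ℂ] Matrix a a ℂ)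
    (hadj : ∀ (X : Matrix b b ℂ) (Y : Matrix a a ℂ), ((Tad X)ᴴ * Y).trace = (Xᴴ * T Y).trace) :
    hsNorm (tensorHom Tad Tad (swapOp b)) ≤ ∑ m, ∑ n, hsNorm (T (single m n 1)) ^ 2 := by
  rw [← pow_le_pow_iff_left₀ (hsNorm_nonneg _) (by positivity) two_ne_zero, hsNorm_sq,
    ← Fintype.sum_prod_sum_prod_mul_eq_sq]
  gcongr with p _ q
  exact norm_twirledSwap_apply_sq_le T Tad hadj p q

theorem map_single_swap_apply {a b : Type*} [DecidableEq a] (T : Matrix a a ℂ →ₗ[ℂ] Matrix b b ℂ)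
    (hT : ∀ M : Matrix a a ℂ, M.IsHermitian → (T M).IsHermitian) (i j : a) (x y : b) :
    T (single j i 1) y x = star (T (single i j 1) x y) := by
  have hstar := T.map_star_of_isSelfAdjoint (fun M hM => (hT M hM).isSelfAdjoint) (single i j 1)
  rw [star_eq_conjTranspose, conjTranspose_single, star_one] at hstar
  rw [hstar, star_eq_conjTranspose, conjTranspose_apply]

theorem choi_isHermitian {a b : Type*} [Fintype a] [DecidableEq a]
    (T : Matrix a a ℂ →ₗ[ℂ] Matrix b b ℂ)
    (hT : ∀ M : Matrix a a ℂ, M.IsHermitian → (T M).IsHermitian) :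
    (choi ⇑T).IsHermitian := by
  ext p q
  rw [conjTranspose_apply, choi_apply, choi_apply, star_mul', map_single_swap_apply T hT,
    star_star, star_inv₀, star_natCast]

theorem card_sq_mul_re_trace_choi_mul_self {a b : Type*} [Fintype a] [DecidableEq a] [Fintype b]
    (T : Matrix a a ℂ →ₗ[ℂ] Matrix b b ℂ)
    (hT : ∀ M : Matrix a a ℂ, M.IsHermitian → (T M).IsHermitian) :
    (Fintype.card a : ℝ) ^ 2 * ((choi ⇑T * choi ⇑T).trace).re =
      ∑ m, ∑ n, hsNorm (T (single m n 1)) ^ 2 := by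
  rcases isEmpty_or_nonempty a with _ | _
  · simp
  nth_rw 1 [← choi_isHermitian T hT]
  simp only [re_trace_conjTranspose_mul_self, choi_apply, norm_mul, norm_inv,
    Complex.norm_natCast, mul_pow, ← mul_sum, hsNorm_sq, Fintype.sum_prod_type_right]
  rw [← mul_assoc, ← mul_pow, mul_inv_cancel₀ (by positivity), one_pow, one_mul]
  exact sum_congr rfl fun i _ => sum_comm

/-- **Operator-norm bound on the twirled swap**:
`‖(T† ⊗ T†)(F_B)‖_∞ ≤ d_A² Tr(ω²)` where `T†` is the Hilbert–Schmidt adjoint of the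
Hermiticity-preserving map `T` and `ω` is its Choi–Jamiołkowski representation. -/
theorem twirled_swap_opNorm_bound {a b : Type*} [Fintype a] [DecidableEq a]
    [Fintype b] [DecidableEq b]
    (T : Matrix a a ℂ →ₗ[ℂ] Matrix b b ℂ)
    (hT : ∀ M : Matrix a a ℂ, M.IsHermitian → (T M).IsHermitian)
    (Tad : Matrix b b ℂ →ₗ[ℂ] Matrix a a ℂ)
    (hadj : ∀ (X : Matrix b b ℂ) (Y : Matrix a a ℂ),
      ((Tad X)ᴴ * Y).trace = (Xᴴ * T Y).trace) :
    opNorm (tensorHom (⇑Tad) (⇑Tad) (swapOp b)) ≤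
      (Fintype.card a : ℝ) ^ 2 * ((choi ⇑T * choi ⇑T).trace).re := by
  calc opNorm (tensorHom (⇑Tad) (⇑Tad) (swapOp b))
      ≤ hsNorm (tensorHom (⇑Tad) (⇑Tad) (swapOp b)) := opNorm_le_hsNorm _
    _ ≤ ∑ m, ∑ n, hsNorm (T (single m n 1)) ^ 2 := hsNorm_twirledSwap_le T Tad hadj
    _ = (Fintype.card a : ℝ) ^ 2 * ((choi ⇑T * choi ⇑T).trace).re :=
      (card_sq_mul_re_trace_choi_mul_self T hT).symm

end Decoupling
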